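/- arXiv:0803.1195 — 3 statements merged into one kernel-verified Lean document; each statement's English description precedes it below -/
import Mathlib

section
/- For finite random variables A, B, E, U with joint distribution p(a,b,e,u) = p(a,b,e)p(u|a) (i.e., U − A − (B,E) forms a Markov chain), the identity [I(A;B) − I(A;E)] − [I(A;B|U) − I(A;E|U)] = I(B;U) − I(E;U) holds. -/
/-!
For any `Y`, expanding into entropies gives
`(I(A;Y) - I(A;Y|U)) - I(Y;U) = H(A) - H(A,Y) - H(A,U) + H(A,Y,U) = -I(U;Y|A)`,
which vanishes when `U − A − Y` is a Markov chain. The Markov chain `U − A − (B,E)` implies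
`U − A − B` and `U − A − E`, so the identity holds for `Y = B` and `Y = E`; subtracting the two
gives the theorem.

The chain rule `H(X,Y,Z) + H(Z) = H(X,Z) + H(Y,Z)` for a Markov chain `X − Z − Y` comes from
writing each entropy as the expectation of `-log p` at the observed outcome: there the Markov
identity `p(x,y,z) p(z) = p(x,z) p(y,z)` holds pointwise.
-/

open Finset

/-- `w` is a probability mass function on the finite sample space `Ω`. -/
def IsPMF {Ω : Type} [Fintype Ω] (w : Ω → ℝ) : Prop :=
  (∀ ω, 0 ≤ w ω) ∧ ∑ ω, w ω = 1

open scoped Classical in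
/-- Probability that the random variable `X` takes the value `x`. -/
noncomputable def pr {Ω : Type} [Fintype Ω] (w : Ω → ℝ) {α : Type} (X : Ω → α) (x : α) : ℝ :=
  ∑ ω, if X ω = x then w ω else 0

/-- Shannon entropy (in bits) of the random variable `X`. -/
noncomputable def H {Ω : Type} [Fintype Ω] (w : Ω → ℝ) {α : Type} [Fintype α] (X : Ω → α) : ℝ :=
  -∑ x, pr w X x * Real.logb 2 (pr w X x)

/-- Conditional entropy `H(X|Y)`. -/
noncomputable def condH {Ω : Type} [Fintype Ω] (w : Ω → ℝ) {α β : Type} [Fintype α] [Fintype β]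
    (X : Ω → α) (Y : Ω → β) : ℝ :=
  H w (fun ω => (X ω, Y ω)) - H w Y

/-- Mutual information `I(X;Y)`. -/
noncomputable def MI {Ω : Type} [Fintype Ω] (w : Ω → ℝ) {α β : Type} [Fintype α] [Fintype β]
    (X : Ω → α) (Y : Ω → β) : ℝ :=
  H w X + H w Y - H w (fun ω => (X ω, Y ω))

/-- Conditional mutual information `I(X;Y|Z)`. -/
noncomputable def cMI {Ω : Type} [Fintype Ω] (w : Ω → ℝ) {α β γ : Type}
    [Fintype α] [Fintype β] [Fintype γ] (X : Ω → α) (Y : Ω → β) (Z : Ω → γ) : ℝ :=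
  condH w X Z - condH w X (fun ω => (Y ω, Z ω))

/-- `X` and `Y` are conditionally independent given `Z`, i.e. the Markov chain `X − Z − Y`. -/
def CondIndep {Ω : Type} [Fintype Ω] (w : Ω → ℝ) {α β γ : Type}
    (X : Ω → α) (Y : Ω → β) (Z : Ω → γ) : Prop :=
  ∀ x y z, pr w (fun ω => (X ω, Y ω, Z ω)) (x, y, z) * pr w Z z =
    pr w (fun ω => (X ω, Z ω)) (x, z) * pr w (fun ω => (Y ω, Z ω)) (y, z)

section Entropy

variable {Ω : Type} [Fintype Ω] (w : Ω → ℝ)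

lemma pr_congr {α β : Type} {F : Ω → α} {G : Ω → β} {v : α} {u : β}
    (h : ∀ ω, F ω = v ↔ G ω = u) : pr w F v = pr w G u := by
  classical
  unfold pr
  exact sum_congr rfl fun ω _ => by simp [h ω]

lemma self_le_pr {w : Ω → ℝ} (hw : ∀ ω, 0 ≤ w ω) {α : Type} (X : Ω → α) (ω : Ω) :
    w ω ≤ pr w X (X ω) := by
  classical
  unfold pr
  simpa using single_le_sum (f := fun ω' => if X ω' = X ω then w ω' else 0)
    (fun ω' _ => by split_ifs <;> simp [hw ω']) (mem_univ ω)

lemma sum_pr_mul {α : Type} [Fintype α] (X : Ω → α) (φ : α → ℝ) :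
    ∑ x, pr w X x * φ x = ∑ ω, w ω * φ (X ω) := by
  classical
  unfold pr
  simp_rw [sum_mul]
  rw [sum_comm]
  simp [ite_mul]

lemma H_eq_neg_sum_logb_pr {α : Type} [Fintype α] (X : Ω → α) :
    H w X = -∑ ω, w ω * Real.logb 2 (pr w X (X ω)) := by
  rw [H, sum_pr_mul w X fun x => Real.logb 2 (pr w X x)]

lemma H_congr {α β : Type} [Fintype α] [Fintype β] {X : Ω → α} {Y : Ω → β}
    (h : ∀ ω ω', X ω = X ω' ↔ Y ω = Y ω') : H w X = H w Y := by
  simp_rw [H_eq_neg_sum_logb_pr]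
  congr 1
  exact sum_congr rfl fun ω _ => by rw [pr_congr w fun ω' => h ω' ω]

open scoped Classical in
lemma pr_comp_fst {α β δ : Type} [Fintype α] (f : α → β) (X : Ω → α) (Y : Ω → δ)
    (b : β) (y : δ) :
    pr w (fun ω => (f (X ω), Y ω)) (b, y) = ∑ a with f a = b, pr w (fun ω => (X ω, Y ω)) (a, y) := by
  unfold pr
  rw [sum_comm]
  refine sum_congr rfl fun ω _ => ?_
  by_cases hy : Y ω = y
  · simp [Prod.ext_iff, hy, eq_comm]
  · simp [Prod.ext_iff, hy]

lemma pr_triple_comm {α β γ : Type} (X : Ω → α) (Y : Ω → β) (Z : Ω → γ) (x : α) (y : β) (z : γ) :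
    pr w (fun ω => (X ω, Y ω, Z ω)) (x, y, z) = pr w (fun ω => (Y ω, X ω, Z ω)) (y, x, z) :=
  pr_congr w fun ω => by simp only [Prod.ext_iff]; tauto

end Entropy

section CondIndep

variable {Ω α β γ : Type} [Fintype Ω] {w : Ω → ℝ} {X : Ω → α} {Y : Ω → β} {Z : Ω → γ}

lemma CondIndep.comp [Fintype β] (h : CondIndep w X Y Z) {β' : Type} (f : β → β') :
    CondIndep w X (fun ω => f (Y ω)) Z := by
  classical
  intro x b z
  have hXfYZ : pr w (fun ω => (X ω, f (Y ω), Z ω)) (x, b, z)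
      = ∑ y with f y = b, pr w (fun ω => (X ω, Y ω, Z ω)) (x, y, z) := by
    rw [pr_triple_comm, pr_comp_fst]
    exact sum_congr rfl fun y _ => (pr_triple_comm w X Y Z x y z).symm
  rw [hXfYZ, pr_comp_fst w f Y Z, sum_mul, mul_sum]
  exact sum_congr rfl fun y _ => h x y z

lemma CondIndep.H_add_H [Fintype α] [Fintype β] [Fintype γ] (hw : ∀ ω, 0 ≤ w ω)
    (h : CondIndep w X Y Z) :
    H w (fun ω => (X ω, Y ω, Z ω)) + H w Z = H w (fun ω => (X ω, Z ω)) + H w (fun ω => (Y ω, Z ω)) := by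
  simp_rw [H_eq_neg_sum_logb_pr, ← neg_add, ← sum_add_distrib, ← mul_add]
  congr 1
  refine sum_congr rfl fun ω _ => ?_
  rcases (hw ω).eq_or_lt with h0 | hpos
  · simp [← h0]
  have hpr {δ : Type} (V : Ω → δ) : pr w V (V ω) ≠ 0 := (hpos.trans_le (self_le_pr hw V ω)).ne'
  rw [← Real.logb_mul (hpr _) (hpr Z), ← Real.logb_mul (hpr _) (hpr _), h]

end CondIndep

lemma MI_sub_cMI_eq_MI_of_condIndep {Ω α β κ : Type} [Fintype Ω] [Fintype α] [Fintype β]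
    [Fintype κ] {w : Ω → ℝ} (hw : ∀ ω, 0 ≤ w ω) {A : Ω → α} {Y : Ω → β} {U : Ω → κ}
    (h : CondIndep w U Y A) : MI w A Y - cMI w A Y U = MI w Y U := by
  have hchain := h.H_add_H hw
  have hUYA : H w (fun ω => (U ω, Y ω, A ω)) = H w (fun ω => (A ω, Y ω, U ω)) :=
    H_congr w fun _ _ => by simp only [Prod.ext_iff]; tauto
  have hUA : H w (fun ω => (U ω, A ω)) = H w (fun ω => (A ω, U ω)) :=
    H_congr w fun _ _ => by simp only [Prod.ext_iff]; tauto
  have hYA : H w (fun ω => (Y ω, A ω)) = H w (fun ω => (A ω, Y ω)) :=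
    H_congr w fun _ _ => by simp only [Prod.ext_iff]; tauto
  simp only [MI, cMI, condH]
  linarith

theorem stmt0 {Ω α β γ κ : Type} [Fintype Ω] [Fintype α] [Fintype β] [Fintype γ] [Fintype κ]
    (w : Ω → ℝ) (hw : IsPMF w) (A : Ω → α) (B : Ω → β) (E : Ω → γ) (U : Ω → κ)
    (hMarkov : CondIndep w U (fun ω => (B ω, E ω)) A) :
    (MI w A B - MI w A E) - (cMI w A B U - cMI w A E U) = MI w B U - MI w E U := by
  have hB := MI_sub_cMI_eq_MI_of_condIndep (Y := B) hw.1 (hMarkov.comp Prod.fst)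
  have hE := MI_sub_cMI_eq_MI_of_condIndep (Y := E) hw.1 (hMarkov.comp Prod.snd)
  linarith
end

section
/- If B is less noisy than E with respect to source A (i.e., I(U;E) ≤ I(U;B) for every U with U − A − (B,E) a Markov chain), then for every such U, I(A;B|U) − I(A;E|U) ≤ I(A;B) − I(A;E). -/
open Finset

/-!
Writing `I(A;B) - I(A;B|U) = I(U;B) - I(U;B|A)` (the interaction information is symmetric), and
likewise for `E`, the Markov chain `U − A − (B,E)` makes both `I(U;B|A)` and `I(U;E|A)` vanish, so
the claimed inequality becomes `I(U;E) ≤ I(U;B)`, which is the less-noisy hypothesis.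
-/

lemma mul_logb_add_mul_logb_eq {b p q r s : ℝ} (hp : 0 ≤ p) (hps : p ≤ s) (h : p * s = q * r) :
    p * Real.logb b p + p * Real.logb b s = p * Real.logb b q + p * Real.logb b r := by
  rcases hp.eq_or_lt with rfl | hp
  · simp
  have hs : s ≠ 0 := (hp.trans_le hps).ne'
  obtain ⟨hq, hr⟩ := mul_ne_zero_iff.1 (h ▸ mul_ne_zero hp.ne' hs)
  rw [← mul_add, ← mul_add, ← Real.logb_mul hp.ne' hs, ← Real.logb_mul hq hr, h]

section Entropy

open scoped Classical

variable {Ω : Type} [Fintype Ω] (w : Ω → ℝ) {α α' : Type}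

lemma pr_nonneg (hw : ∀ ω, 0 ≤ w ω) (X : Ω → α) (x : α) : 0 ≤ pr w X x :=
  sum_nonneg fun ω _ => by split_ifs <;> simp [hw ω]

lemma pr_comp [Fintype α] (g : α → α') (X : Ω → α) (y : α') :
    pr w (fun ω => g (X ω)) y = ∑ x with g x = y, pr w X x := by
  unfold pr
  rw [sum_comm]
  refine sum_congr rfl fun ω _ => ?_
  rw [sum_ite_eq]
  simp

lemma pr_comp_of_injective {g : α → α'} (hg : Function.Injective g) (X : Ω → α) (x : α) :
    pr w (fun ω => g (X ω)) (g x) = pr w X x := by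
  simp [pr, hg.eq_iff]

lemma pr_le_pr_comp [Fintype α] (hw : ∀ ω, 0 ≤ w ω) (g : α → α') (X : Ω → α) (x : α) :
    pr w X x ≤ pr w (fun ω => g (X ω)) (g x) := by
  rw [pr_comp w g X]
  exact single_le_sum (fun x' _ => pr_nonneg w hw X x') (mem_filter.2 ⟨mem_univ x, rfl⟩)

variable {β γ : Type} [Fintype β]

lemma pr_comp_left (Y : Ω → β) (Z : Ω → γ) (f : β → α') (y' : α') (z : γ) :
    pr w (fun ω => (f (Y ω), Z ω)) (y', z) =
      ∑ y with f y = y', pr w (fun ω => (Y ω, Z ω)) (y, z) := by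
  unfold pr
  rw [sum_comm]
  refine sum_congr rfl fun ω _ => ?_
  by_cases hz : Z ω = z <;> simp [hz, sum_ite_eq]

lemma pr_comp_middle (X : Ω → α) (Y : Ω → β) (Z : Ω → γ) (f : β → α') (x : α) (y' : α')
    (z : γ) : pr w (fun ω => (X ω, f (Y ω), Z ω)) (x, y', z) =
      ∑ y with f y = y', pr w (fun ω => (X ω, Y ω, Z ω)) (x, y, z) := by
  unfold pr
  rw [sum_comm]
  refine sum_congr rfl fun ω _ => ?_
  by_cases hx : X ω = x <;> by_cases hz : Z ω = z <;> simp [hx, hz, sum_ite_eq]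

lemma CondIndep.comp_right {X : Ω → α} {Y : Ω → β} {Z : Ω → γ} (h : CondIndep w X Y Z)
    (f : β → α') : CondIndep w X (fun ω => f (Y ω)) Z := by
  intro x y' z
  rw [pr_comp_middle w X Y Z f, pr_comp_left w Y Z f, sum_mul, mul_sum]
  exact sum_congr rfl fun y _ => h x y z

variable [Fintype α] [Fintype γ]

lemma H_comp [Fintype α'] (g : α → α') (X : Ω → α) :
    H w (fun ω => g (X ω)) = -∑ x, pr w X x * Real.logb 2 (pr w (fun ω => g (X ω)) (g x)) := by
  unfold H
  congr 1
  simp only [pr_comp w g X, sum_mul]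
  rw [← sum_fiberwise univ g]
  refine sum_congr rfl fun y _ => sum_congr rfl fun x hx => ?_
  rw [(mem_filter.1 hx).2]

lemma H_comp_of_injective [Fintype α'] {g : α → α'} (hg : Function.Injective g) (X : Ω → α) :
    H w (fun ω => g (X ω)) = H w X := by
  rw [H_comp, H]
  simp only [pr_comp_of_injective w hg]

lemma H_pair_comm (X : Ω → α) (Y : Ω → β) :
    H w (fun ω => (X ω, Y ω)) = H w (fun ω => (Y ω, X ω)) :=
  (H_comp_of_injective w Prod.swap_injective fun ω => (X ω, Y ω)).symm

lemma H_triple_comm (X : Ω → α) (Y : Ω → β) (Z : Ω → γ) :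
    H w (fun ω => (X ω, Y ω, Z ω)) = H w (fun ω => (Z ω, Y ω, X ω)) :=
  (H_comp_of_injective w (g := fun t : α × β × γ => (t.2.2, t.2.1, t.1))
    (fun s t h => by simp_all [Prod.ext_iff]) fun ω => (X ω, Y ω, Z ω)).symm

lemma MI_sub_cMI_comm (X : Ω → α) (Y : Ω → β) (Z : Ω → γ) :
    MI w X Y - cMI w X Y Z = MI w Z Y - cMI w Z Y X := by
  unfold MI cMI condH
  rw [H_pair_comm w X Y, H_pair_comm w X Z, H_pair_comm w Y Z, H_triple_comm w X Y Z]
  ring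

/-- Each entropy is an expectation over the joint law of `(X, Y, Z)`, and conditional independence
makes the integrands cancel pointwise. -/
lemma H_add_H_of_condIndep (hw : ∀ ω, 0 ≤ w ω) {X : Ω → α} {Y : Ω → β} {Z : Ω → γ}
    (h : CondIndep w X Y Z) :
    H w (fun ω => (X ω, Y ω, Z ω)) + H w Z =
      H w (fun ω => (X ω, Z ω)) + H w (fun ω => (Y ω, Z ω)) := by
  set T : Ω → α × β × γ := fun ω => (X ω, Y ω, Z ω)
  have hZ : H w Z = -∑ t, pr w T t * Real.logb 2 (pr w Z t.2.2) :=
    H_comp w (fun t : α × β × γ => t.2.2) T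
  have hXZ : H w (fun ω => (X ω, Z ω)) =
      -∑ t, pr w T t * Real.logb 2 (pr w (fun ω => (X ω, Z ω)) (t.1, t.2.2)) :=
    H_comp w (fun t : α × β × γ => (t.1, t.2.2)) T
  have hYZ : H w (fun ω => (Y ω, Z ω)) =
      -∑ t, pr w T t * Real.logb 2 (pr w (fun ω => (Y ω, Z ω)) (t.2.1, t.2.2)) :=
    H_comp w (fun t : α × β × γ => (t.2.1, t.2.2)) T
  rw [hZ, hXZ, hYZ, H, ← neg_add, ← neg_add, ← sum_add_distrib, ← sum_add_distrib]
  congr 1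
  refine sum_congr rfl fun ⟨x, y, z⟩ _ => mul_logb_add_mul_logb_eq (pr_nonneg w hw T _)
    (pr_le_pr_comp w hw (fun t : α × β × γ => t.2.2) T (x, y, z)) (h x y z)

lemma cMI_eq_zero_of_condIndep (hw : ∀ ω, 0 ≤ w ω) {X : Ω → α} {Y : Ω → β} {Z : Ω → γ}
    (h : CondIndep w X Y Z) : cMI w X Y Z = 0 := by
  have := H_add_H_of_condIndep w hw h
  unfold cMI condH
  linarith

end Entropy

theorem stmt1 {Ω α β γ : Type} [Fintype Ω] [Fintype α] [Fintype β] [Fintype γ]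
    (w : Ω → ℝ) (hw : IsPMF w) (A : Ω → α) (B : Ω → β) (E : Ω → γ)
    (hLessNoisy : ∀ (κ : Type) [Fintype κ] (U : Ω → κ),
      CondIndep w U (fun ω => (B ω, E ω)) A → MI w U E ≤ MI w U B) :
    ∀ (κ : Type) [Fintype κ] (U : Ω → κ), CondIndep w U (fun ω => (B ω, E ω)) A →
      cMI w A B U - cMI w A E U ≤ MI w A B - MI w A E := by
  intro κ _ U hU
  have hB : cMI w U B A = 0 := cMI_eq_zero_of_condIndep w hw.1 (hU.comp_right w Prod.fst)
  have hE : cMI w U E A = 0 := cMI_eq_zero_of_condIndep w hw.1 (hU.comp_right w Prod.snd)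
  linarith [MI_sub_cMI_comm w A B U, MI_sub_cMI_comm w A E U, hLessNoisy κ U hU]
end

section
/- If A − B − E forms a Markov chain, then I(A;B|U) − I(A;E|U) ≥ 0 for every U with U − A − (B,E) a Markov chain; in particular the maximal achievable equivocation difference equals I(A;B) − I(A;E) ≥ 0. -/
open Finset

/-!
By the chain rule, `I(A;B|U) - I(A;E|U) = I(A;B|E,U) - I(A;E|B,U)` and
`I(A;B) - I(A;E) = I(A;B|E) - I(A;E|B)`. By the symmetry of interaction information,
`I(A;B) - I(A;B|U) = I(U;B) - I(U;B|A)`, and the same with `E` for `B`; since `U − A − B` and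
`U − A − E`, the gap between the two differences is `I(U;B) - I(U;E) = I(U;B|E) - I(U;E|B)`.
The semi-graphoid rules combine `A − B − E` and `U − A − (B,E)` into `(U,A) − B − E`, so every
subtracted term `I(A;E|B)`, `I(A;E|B,U)`, `I(U;E|B)` vanishes, and what remains is nonnegative
by Gibbs' inequality.
-/

namespace InformationTheory

variable {Ω α β γ δ : Type} [Fintype Ω] {w : Ω → ℝ}

section Probability

lemma pr_nonneg (hw : ∀ ω, 0 ≤ w ω) (X : Ω → α) (x : α) : 0 ≤ pr w X x :=
  sum_nonneg fun ω _ => by split_ifs <;> simp [hw ω]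

lemma pr_congr {X : Ω → α} {Y : Ω → β} {x : α} {y : β} (h : ∀ ω, X ω = x ↔ Y ω = y) :
    pr w X x = pr w Y y := by
  classical
  exact sum_congr rfl fun ω _ => if_congr (h ω) rfl rfl

lemma le_pr_apply (hw : ∀ ω, 0 ≤ w ω) (X : Ω → α) (ω : Ω) : w ω ≤ pr w X (X ω) := by
  classical
  have := single_le_sum (f := fun ω' => if X ω' = X ω then w ω' else 0)
    (fun ω' _ => ?_) (mem_univ ω)
  · simpa [pr] using this
  · split_ifs <;> simp [hw ω']

lemma sum_pr_mul [Fintype α] (X : Ω → α) (f : α → ℝ) :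
    ∑ x, pr w X x * f x = ∑ ω, w ω * f (X ω) := by
  classical
  simp only [pr, sum_mul, ite_mul, zero_mul]
  rw [sum_comm]
  simp

lemma sum_pr [Fintype α] (X : Ω → α) : ∑ x, pr w X x = ∑ ω, w ω := by
  simpa using sum_pr_mul (w := w) X fun _ => 1

lemma sum_pr_pair [Fintype α] (X : Ω → α) (Z : Ω → γ) (z : γ) :
    ∑ x, pr w (fun ω => (X ω, Z ω)) (x, z) = pr w Z z := by
  classical
  simp only [pr]
  rw [sum_comm]
  refine sum_congr rfl fun ω _ => ?_
  by_cases hZ : Z ω = z <;> simp [hZ, Prod.ext_iff]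

end Probability

section Entropy

variable [Fintype α] [Fintype β] [Fintype γ] [Fintype δ]

lemma H_eq_sum (X : Ω → α) : H w X = -∑ ω, w ω * Real.logb 2 (pr w X (X ω)) := by
  rw [H, sum_pr_mul X fun x => Real.logb 2 (pr w X x)]

lemma H_congr {X : Ω → α} {Y : Ω → β} (h : ∀ ω ω', X ω = X ω' ↔ Y ω = Y ω') :
    H w X = H w Y := by
  simp only [H_eq_sum, pr_congr fun ω' => h ω' _]

lemma cMI_comm (X : Ω → α) (Y : Ω → β) (Z : Ω → γ) : cMI w X Y Z = cMI w Y X Z := by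
  have hXYZ : H w (fun ω => (X ω, Y ω, Z ω)) = H w (fun ω => (Y ω, X ω, Z ω)) :=
    H_congr fun _ _ => by simp only [Prod.mk.injEq]; tauto
  unfold cMI condH
  rw [hXYZ]
  ring

lemma cMI_prod_right (X : Ω → α) (Y : Ω → β) (W : Ω → δ) (Z : Ω → γ) :
    cMI w X (fun ω => (Y ω, W ω)) Z = cMI w X Y Z + cMI w X W (fun ω => (Y ω, Z ω)) := by
  have hXYWZ : H w (fun ω => (X ω, (Y ω, W ω), Z ω)) = H w (fun ω => (X ω, W ω, Y ω, Z ω)) :=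
    H_congr fun _ _ => by simp only [Prod.mk.injEq]; tauto
  have hYWZ : H w (fun ω => ((Y ω, W ω), Z ω)) = H w (fun ω => (W ω, Y ω, Z ω)) :=
    H_congr fun _ _ => by simp only [Prod.mk.injEq]; tauto
  unfold cMI condH
  rw [hXYWZ, hYWZ]
  ring

lemma cMI_congr {α' β' γ' : Type} [Fintype α'] [Fintype β'] [Fintype γ']
    {X : Ω → α} {Y : Ω → β} {Z : Ω → γ} {X' : Ω → α'} {Y' : Ω → β'} {Z' : Ω → γ'}
    (hX : ∀ ω ω', X ω = X ω' ↔ X' ω = X' ω') (hY : ∀ ω ω', Y ω = Y ω' ↔ Y' ω = Y' ω')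
    (hZ : ∀ ω ω', Z ω = Z ω' ↔ Z' ω = Z' ω') : cMI w X Y Z = cMI w X' Y' Z' := by
  unfold cMI condH
  congr 2 <;> exact H_congr fun _ _ => by simp only [Prod.mk.injEq, hX, hY, hZ]

lemma cMI_prod_comm (X : Ω → α) (Y : Ω → β) (W : Ω → δ) (Z : Ω → γ) :
    cMI w X (fun ω => (Y ω, W ω)) Z = cMI w X (fun ω => (W ω, Y ω)) Z :=
  cMI_congr (fun _ _ => Iff.rfl) (fun _ _ => by simp only [Prod.mk.injEq]; tauto)
    fun _ _ => Iff.rfl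

lemma cMI_cond_comm (X : Ω → α) (Y : Ω → β) (Z : Ω → γ) (W : Ω → δ) :
    cMI w X Y (fun ω => (Z ω, W ω)) = cMI w X Y (fun ω => (W ω, Z ω)) :=
  cMI_congr (fun _ _ => Iff.rfl) (fun _ _ => Iff.rfl)
    fun _ _ => by simp only [Prod.mk.injEq]; tauto

lemma cMI_sub_cMI (X : Ω → α) (Y : Ω → β) (W : Ω → δ) (Z : Ω → γ) :
    cMI w X Y Z - cMI w X W Z =
      cMI w X Y (fun ω => (W ω, Z ω)) - cMI w X W (fun ω => (Y ω, Z ω)) := by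
  rw [sub_eq_sub_iff_add_eq_add, ← cMI_prod_right, add_comm, ← cMI_prod_right, cMI_prod_comm]

lemma MI_sub_MI (X : Ω → α) (Y : Ω → β) (W : Ω → δ) :
    MI w X Y - MI w X W = cMI w X Y W - cMI w X W Y := by
  have hXYW : H w (fun ω => (X ω, Y ω, W ω)) = H w (fun ω => (X ω, W ω, Y ω)) :=
    H_congr fun _ _ => by simp only [Prod.mk.injEq]; tauto
  have hYW : H w (fun ω => (Y ω, W ω)) = H w (fun ω => (W ω, Y ω)) :=
    H_congr fun _ _ => by simp only [Prod.mk.injEq]; tauto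
  unfold MI cMI condH
  rw [hXYW, hYW]
  ring

lemma MI_sub_cMI (X : Ω → α) (Y : Ω → β) (Z : Ω → γ) :
    MI w X Y - cMI w X Y Z = MI w Z Y - cMI w Z Y X := by
  have hXY : H w (fun ω => (X ω, Y ω)) = H w (fun ω => (Y ω, X ω)) :=
    H_congr fun _ _ => by simp only [Prod.mk.injEq]; tauto
  have hXZ : H w (fun ω => (X ω, Z ω)) = H w (fun ω => (Z ω, X ω)) :=
    H_congr fun _ _ => by simp only [Prod.mk.injEq]; tauto
  have hYZ : H w (fun ω => (Y ω, Z ω)) = H w (fun ω => (Z ω, Y ω)) :=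
    H_congr fun _ _ => by simp only [Prod.mk.injEq]; tauto
  have hXYZ : H w (fun ω => (X ω, Y ω, Z ω)) = H w (fun ω => (Z ω, Y ω, X ω)) :=
    H_congr fun _ _ => by simp only [Prod.mk.injEq]; tauto
  unfold MI cMI condH
  rw [hXY, hXZ, hYZ, hXYZ]
  ring

end Entropy

section Gibbs

variable [Fintype α] [Fintype β] [Fintype γ]

lemma cMI_eq_sum_logb (hw : ∀ ω, 0 ≤ w ω) (X : Ω → α) (Y : Ω → β) (Z : Ω → γ) :
    cMI w X Y Z = ∑ ω, w ω * Real.logb 2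
      (pr w (fun ω => (X ω, Y ω, Z ω)) (X ω, Y ω, Z ω) * pr w Z (Z ω) /
        (pr w (fun ω => (X ω, Z ω)) (X ω, Z ω) * pr w (fun ω => (Y ω, Z ω)) (Y ω, Z ω))) := by
  have hterm : ∀ ω, w ω * Real.logb 2
      (pr w (fun ω => (X ω, Y ω, Z ω)) (X ω, Y ω, Z ω) * pr w Z (Z ω) /
        (pr w (fun ω => (X ω, Z ω)) (X ω, Z ω) * pr w (fun ω => (Y ω, Z ω)) (Y ω, Z ω))) =
      w ω * Real.logb 2 (pr w (fun ω => (X ω, Y ω, Z ω)) (X ω, Y ω, Z ω))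
        + w ω * Real.logb 2 (pr w Z (Z ω))
        - w ω * Real.logb 2 (pr w (fun ω => (X ω, Z ω)) (X ω, Z ω))
        - w ω * Real.logb 2 (pr w (fun ω => (Y ω, Z ω)) (Y ω, Z ω)) := by
    intro ω
    rcases (hw ω).eq_or_lt with hω | hω
    · simp [← hω]
    have hpos : ∀ {ρ : Type} (V : Ω → ρ), pr w V (V ω) ≠ 0 :=
      fun V => (hω.trans_le (le_pr_apply hw V ω)).ne'
    rw [Real.logb_div (mul_ne_zero (hpos _) (hpos Z)) (mul_ne_zero (hpos _) (hpos _)),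
      Real.logb_mul (hpos _) (hpos Z), Real.logb_mul (hpos _) (hpos _)]
    ring
  unfold cMI condH
  simp only [H_eq_sum, hterm, sum_add_distrib, sum_sub_distrib]
  ring

lemma cMI_eq_zero_of_condIndep (hw : ∀ ω, 0 ≤ w ω) {X : Ω → α} {Y : Ω → β} {Z : Ω → γ}
    (h : CondIndep w X Y Z) : cMI w X Y Z = 0 := by
  rw [cMI_eq_sum_logb hw]
  refine sum_eq_zero fun ω _ => ?_
  rw [h]
  by_cases hq : pr w (fun ω => (X ω, Z ω)) (X ω, Z ω) * pr w (fun ω => (Y ω, Z ω)) (Y ω, Z ω) = 0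
  · simp [hq]
  · simp [div_self hq]

lemma sum_pr_mul_pr_div_pr_le_one (hw : IsPMF w) (X : Ω → α) (Y : Ω → β) (Z : Ω → γ) :
    ∑ x, ∑ yz : β × γ, pr w (fun ω => (X ω, Z ω)) (x, yz.2) *
      pr w (fun ω => (Y ω, Z ω)) yz / pr w Z yz.2 ≤ 1 := calc
  _ = ∑ yz : β × γ, pr w Z yz.2 * pr w (fun ω => (Y ω, Z ω)) yz / pr w Z yz.2 := by
    rw [sum_comm]
    simp only [← sum_div, ← sum_mul, sum_pr_pair]
  _ ≤ ∑ yz : β × γ, pr w (fun ω => (Y ω, Z ω)) yz := by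
    gcongr with yz
    rcases eq_or_ne (pr w Z yz.2) 0 with hZ | hZ
    · simpa [hZ] using pr_nonneg hw.1 _ _
    · rw [mul_div_cancel_left₀ _ hZ]
  _ = 1 := by rw [sum_pr, hw.2]

lemma cMI_nonneg (hw : IsPMF w) (X : Ω → α) (Y : Ω → β) (Z : Ω → γ) : 0 ≤ cMI w X Y Z := by
  set P := pr w (fun ω => (X ω, Y ω, Z ω))
  -- `g = q / P` for the coupling `q(x,y,z) = p(x,z) p(y,z) / p(z)`, which has mass at most 1.
  set g : α × β × γ → ℝ := fun v =>
    pr w (fun ω => (X ω, Z ω)) (v.1, v.2.2) * pr w (fun ω => (Y ω, Z ω)) v.2 / (P v * pr w Z v.2.2)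
  have hlog2 : 0 < Real.log 2 := Real.log_pos one_lt_two
  have hterm : ∀ ω, w ω * (1 - g (X ω, Y ω, Z ω)) / Real.log 2 ≤ w ω * Real.logb 2
      (P (X ω, Y ω, Z ω) * pr w Z (Z ω) /
        (pr w (fun ω => (X ω, Z ω)) (X ω, Z ω) * pr w (fun ω => (Y ω, Z ω)) (Y ω, Z ω))) := by
    intro ω
    rcases (hw.1 ω).eq_or_lt with hω | hω
    · simp [← hω]
    have hpos : ∀ {ρ : Type} (V : Ω → ρ), 0 < pr w V (V ω) :=
      fun V => hω.trans_le (le_pr_apply hw.1 V ω)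
    rw [Real.logb, ← mul_div_assoc]
    gcongr
    have hP : 0 < P (X ω, Y ω, Z ω) := hpos fun ω => (X ω, Y ω, Z ω)
    have hXZ := hpos fun ω => (X ω, Z ω)
    have hYZ := hpos fun ω => (Y ω, Z ω)
    have hZ := hpos Z
    refine (le_of_eq ?_).trans (Real.one_sub_inv_le_log_of_pos (by positivity))
    rw [inv_div]
  have hmass : ∑ ω, w ω * g (X ω, Y ω, Z ω) ≤ 1 := calc
    _ = ∑ x, ∑ yz : β × γ, P (x, yz) * g (x, yz) := by
      rw [← sum_pr_mul (fun ω => (X ω, Y ω, Z ω)) g, Fintype.sum_prod_type]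
    _ ≤ ∑ x, ∑ yz : β × γ, pr w (fun ω => (X ω, Z ω)) (x, yz.2) *
          pr w (fun ω => (Y ω, Z ω)) yz / pr w Z yz.2 := by
      gcongr with x _ yz _
      rcases (show 0 ≤ P (x, yz) from pr_nonneg hw.1 _ _).eq_or_lt with hP | hP
      · rw [← hP, zero_mul]
        exact div_nonneg (mul_nonneg (pr_nonneg hw.1 _ _) (pr_nonneg hw.1 _ _)) (pr_nonneg hw.1 _ _)
      · rw [mul_div_assoc', mul_div_mul_left _ _ hP.ne']
    _ ≤ 1 := sum_pr_mul_pr_div_pr_le_one hw X Y Z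
  have hsum : 0 ≤ ∑ ω, w ω * (1 - g (X ω, Y ω, Z ω)) / Real.log 2 := by
    simp only [mul_sub, mul_one, ← sum_div, sum_sub_distrib, hw.2]
    exact div_nonneg (sub_nonneg.2 hmass) hlog2.le
  rw [cMI_eq_sum_logb hw.1]
  exact hsum.trans (sum_le_sum fun ω _ => hterm ω)

lemma cMI_prod_right_eq_zero_iff [Fintype δ] (hw : IsPMF w) (X : Ω → α) (Y : Ω → β)
    (W : Ω → δ) (Z : Ω → γ) :
    cMI w X (fun ω => (Y ω, W ω)) Z = 0 ↔
      cMI w X Y Z = 0 ∧ cMI w X W (fun ω => (Y ω, Z ω)) = 0 := by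
  rw [cMI_prod_right, add_eq_zero_iff_of_nonneg (cMI_nonneg hw _ _ _) (cMI_nonneg hw _ _ _)]

end Gibbs

lemma cMI_prod_eq_zero_of_markov {κ : Type} [Fintype α] [Fintype β] [Fintype γ] [Fintype κ]
    (hw : IsPMF w) {A : Ω → α} {B : Ω → β} {E : Ω → γ} {U : Ω → κ}
    (hAE : cMI w A E B = 0) (hU : cMI w U (fun ω => (B ω, E ω)) A = 0) :
    cMI w E (fun ω => (U ω, A ω)) B = 0 := by
  have hUE : cMI w U E (fun ω => (B ω, A ω)) = 0 := ((cMI_prod_right_eq_zero_iff hw _ _ _ _).1 hU).2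
  rw [cMI_prod_comm, cMI_prod_right_eq_zero_iff hw, cMI_comm, hAE, cMI_comm, cMI_cond_comm, hUE]
  exact ⟨rfl, rfl⟩

end InformationTheory

open InformationTheory

theorem stmt5 {Ω α β γ : Type} [Fintype Ω] [Fintype α] [Fintype β] [Fintype γ]
    (w : Ω → ℝ) (hw : IsPMF w) (A : Ω → α) (B : Ω → β) (E : Ω → γ)
    (hdeg : CondIndep w A E B) :
    (∀ (κ : Type) [Fintype κ] (U : Ω → κ), CondIndep w U (fun ω => (B ω, E ω)) A →
      0 ≤ cMI w A B U - cMI w A E U) ∧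
    0 ≤ MI w A B - MI w A E ∧
    (∀ (κ : Type) [Fintype κ] (U : Ω → κ), CondIndep w U (fun ω => (B ω, E ω)) A →
      cMI w A B U - cMI w A E U ≤ MI w A B - MI w A E) := by
  have hAE : cMI w A E B = 0 := cMI_eq_zero_of_condIndep hw.1 hdeg
  refine ⟨fun κ _ U hU => ?_, ?_, fun κ _ U hU => ?_⟩
  · obtain ⟨-, hEA⟩ := (cMI_prod_right_eq_zero_iff hw _ _ _ _).1
      (cMI_prod_eq_zero_of_markov hw hAE (cMI_eq_zero_of_condIndep hw.1 hU))
    rw [cMI_sub_cMI, cMI_comm A E, cMI_cond_comm E A B U, hEA, sub_zero]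
    exact cMI_nonneg hw _ _ _
  · rw [MI_sub_MI, hAE, sub_zero]
    exact cMI_nonneg hw _ _ _
  · have hU₀ := cMI_eq_zero_of_condIndep hw.1 hU
    obtain ⟨hEU, -⟩ := (cMI_prod_right_eq_zero_iff hw _ _ _ _).1
      (cMI_prod_eq_zero_of_markov hw hAE hU₀)
    obtain ⟨hUB, -⟩ := (cMI_prod_right_eq_zero_iff hw _ _ _ _).1 hU₀
    obtain ⟨hUE, -⟩ := (cMI_prod_right_eq_zero_iff hw _ _ _ _).1 (cMI_prod_comm U B E A ▸ hU₀)
    have hB := MI_sub_cMI (w := w) A B U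
    have hE := MI_sub_cMI (w := w) A E U
    have hBE := MI_sub_MI (w := w) U B E
    rw [cMI_comm] at hEU
    linarith [cMI_nonneg hw U B E]
end
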